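/- arXiv:2601.09409 — 2 statements merged into one kernel-verified Lean document; each statement's English description precedes it below -/
import Mathlib

section
/- Let Σ be an alphabet and let L and K be languages over Σ each recognized by a reversible NFA with exactly one initial state. Then the intersection L ∩ K is also recognized by a reversible NFA with exactly one initial state. -/
open Matrix

namespace RevWA

/-- A weighted automaton over a semiring `S` and alphabet `α`, given by a linear
representation: number of states `n`, initial weight vector, transition matrices,
and final weight vector. -/
structure WA (S : Type) [Semiring S] (α : Type) where
  n : ℕ
  init : Fin n → S
  trans : α → Matrix (Fin n) (Fin n) S
  final : Fin n → S

variable {S : Type} [Semiring S] {α : Type}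

/-- The matrix associated to a word: product of the transition matrices of its letters. -/
def WA.matWord (A : WA S α) (w : List α) : Matrix (Fin A.n) (Fin A.n) S :=
  (w.map A.trans).prod

/-- The series realized by a weighted automaton: `i ⬝ μ(w) ⬝ f`. -/
def WA.series (A : WA S α) : List α → S :=
  fun w => A.init ⬝ᵥ (A.matWord w).mulVec A.final

/-- A matrix has at most one nonzero entry in each row. -/
def rowOk {n : ℕ} (M : Matrix (Fin n) (Fin n) S) : Prop :=
  ∀ i j j', M i j ≠ 0 → M i j' ≠ 0 → j = j'

/-- A matrix has at most one nonzero entry in each column. -/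
def colOk {n : ℕ} (M : Matrix (Fin n) (Fin n) S) : Prop :=
  ∀ i i' j, M i j ≠ 0 → M i' j ≠ 0 → i = i'

/-- A weighted automaton is reversible if each transition matrix has at most one
nonzero entry in each row and at most one nonzero entry in each column. -/
def WA.Reversible (A : WA S α) : Prop :=
  ∀ a : α, rowOk (A.trans a) ∧ colOk (A.trans a)

/-- A weighted automaton has exactly one initial state. -/
def WA.OneInitial (A : WA S α) : Prop :=
  ∃! q : Fin A.n, A.init q ≠ 0

/-- `Rev S α`: series realized by reversible weighted automata over `S` and `α`. -/
def Rev (S : Type) [Semiring S] (α : Type) : Set (List α → S) :=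
  {r | ∃ A : WA S α, A.Reversible ∧ A.series = r}

/-- `Rev₁ S α`: series realized by reversible weighted automata over `S` and `α`
with exactly one initial state. -/
def Rev1 (S : Type) [Semiring S] (α : Type) : Set (List α → S) :=
  {r | ∃ A : WA S α, A.Reversible ∧ A.OneInitial ∧ A.series = r}

/-- The support of a series. -/
def supp (r : List α → S) : Set (List α) :=
  {w | r w ≠ 0}

/-- `RevL S α`: supports of series realized by reversible weighted automata. -/
def RevL (S : Type) [Semiring S] (α : Type) : Set (Set (List α)) :=
  {L | ∃ r ∈ Rev S α, supp r = L}

/-- `RevL₁ S α`: supports of series realized by reversible weighted automata with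
exactly one initial state. -/
def RevL1 (S : Type) [Semiring S] (α : Type) : Set (Set (List α)) :=
  {L | ∃ r ∈ Rev1 S α, supp r = L}

/-- The characteristic series of a language `L` over `S`. -/
noncomputable def charSeries (S : Type) [Semiring S] {α : Type} (L : Set (List α)) :
    List α → S :=
  L.indicator 1

/-- A reversible nondeterministic finite automaton: deterministic and
codeterministic transition relation. -/
structure RevNFA (α : Type) where
  Q : Type
  fintypeQ : Fintype Q
  δ : Q → α → Q → Prop
  I : Set Q
  F : Set Q
  det : ∀ p a q q', δ p a q → δ p a q' → q = q'
  codet : ∀ p p' a q, δ p a q → δ p' a q → p = p'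

/-- Paths in a reversible NFA. -/
inductive RevNFA.Path {α : Type} (A : RevNFA α) : A.Q → List α → A.Q → Prop
  | nil (q : A.Q) : RevNFA.Path A q [] q
  | cons {p q r : A.Q} {a : α} {w : List α} :
      A.δ p a q → RevNFA.Path A q w r → RevNFA.Path A p (a :: w) r

/-- The language recognized by a reversible NFA. -/
def RevNFA.lang {α : Type} (A : RevNFA α) : Set (List α) :=
  {w | ∃ p ∈ A.I, ∃ q ∈ A.F, A.Path p w q}

/-- A reversible NFA has exactly one initial state. -/
def RevNFA.OneInitial {α : Type} (A : RevNFA α) : Prop :=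
  ∃ q : A.Q, A.I = {q}

/-- `RevL(𝔹,α)`: languages recognized by reversible NFAs. -/
def RevLB (α : Type) : Set (Set (List α)) :=
  {L | ∃ A : RevNFA α, A.lang = L}

/-- `RevL₁(𝔹,α)`: languages recognized by reversible NFAs with exactly one
initial state. -/
def RevL1B (α : Type) : Set (Set (List α)) :=
  {L | ∃ A : RevNFA α, A.OneInitial ∧ A.lang = L}

end RevWA

namespace RevWA.RevNFA

variable {α : Type}

theorem path_nil_iff {A : RevNFA α} {p q : A.Q} : A.Path p [] q ↔ p = q :=
  ⟨fun | .nil _ => rfl, fun h => h ▸ .nil p⟩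

theorem path_cons_iff {A : RevNFA α} {p r : A.Q} {a : α} {w : List α} :
    A.Path p (a :: w) r ↔ ∃ q, A.δ p a q ∧ A.Path q w r :=
  ⟨fun | .cons hδ hw => ⟨_, hδ, hw⟩, fun ⟨_, hδ, hw⟩ => .cons hδ hw⟩

abbrev prod (A B : RevNFA α) : RevNFA α where
  Q := A.Q × B.Q
  fintypeQ := @instFintypeProd _ _ A.fintypeQ B.fintypeQ
  δ p a q := A.δ p.1 a q.1 ∧ B.δ p.2 a q.2
  I := A.I ×ˢ B.I
  F := A.F ×ˢ B.F
  det p a q q' h h' :=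
    Prod.ext (A.det p.1 a q.1 q'.1 h.1 h'.1) (B.det p.2 a q.2 q'.2 h.2 h'.2)
  codet p p' a q h h' :=
    Prod.ext (A.codet p.1 p'.1 a q.1 h.1 h'.1) (B.codet p.2 p'.2 a q.2 h.2 h'.2)

theorem path_prod_iff {A B : RevNFA α} {p r : A.Q × B.Q} {w : List α} :
    (A.prod B).Path p w r ↔ A.Path p.1 w r.1 ∧ B.Path p.2 w r.2 := by
  induction w generalizing p with
  | nil => simp only [path_nil_iff, Prod.ext_iff]
  | cons a w ih =>
    simp only [path_cons_iff, ih]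
    constructor
    · rintro ⟨q, ⟨hδA, hδB⟩, hwA, hwB⟩
      exact ⟨⟨q.1, hδA, hwA⟩, ⟨q.2, hδB, hwB⟩⟩
    · rintro ⟨⟨qA, hδA, hwA⟩, ⟨qB, hδB, hwB⟩⟩
      exact ⟨(qA, qB), ⟨hδA, hδB⟩, hwA, hwB⟩

theorem lang_prod (A B : RevNFA α) : (A.prod B).lang = A.lang ∩ B.lang := by
  ext w
  constructor
  · rintro ⟨p, hp, r, hr, hw⟩
    obtain ⟨hwA, hwB⟩ := path_prod_iff.mp hw
    exact ⟨⟨p.1, hp.1, r.1, hr.1, hwA⟩, ⟨p.2, hp.2, r.2, hr.2, hwB⟩⟩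
  · rintro ⟨⟨pA, hpA, rA, hrA, hwA⟩, ⟨pB, hpB, rB, hrB, hwB⟩⟩
    exact ⟨(pA, pB), ⟨hpA, hpB⟩, (rA, rB), ⟨hrA, hrB⟩, path_prod_iff.mpr ⟨hwA, hwB⟩⟩

theorem OneInitial.prod {A B : RevNFA α} (hA : A.OneInitial) (hB : B.OneInitial) :
    (A.prod B).OneInitial := by
  obtain ⟨qA, hqA⟩ := hA
  obtain ⟨qB, hqB⟩ := hB
  exact ⟨(qA, qB), show A.I ×ˢ B.I = _ by rw [hqA, hqB, Set.singleton_prod_singleton]⟩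

end RevWA.RevNFA

open RevWA in
theorem stmt5_general (α : Type)
    (L K : Set (List α)) (hL : L ∈ RevL1B α) (hK : K ∈ RevL1B α) :
    L ∩ K ∈ RevL1B α := by
  obtain ⟨A, hA, rfl⟩ := hL
  obtain ⟨B, hB, rfl⟩ := hK
  exact ⟨A.prod B, hA.prod hB, A.lang_prod B⟩

open RevWA in
theorem stmt5 (α : Type) [Fintype α] [Nonempty α]
    (L K : Set (List α)) (hL : L ∈ RevL1B α) (hK : K ∈ RevL1B α) :
    L ∩ K ∈ RevL1B α :=
  stmt5_general α L K hL hK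
end

section
/- Let R be a nontrivial ring ((0 : R) ≠ 1), Σ an alphabet, and L ∈ RevL(ZMod 2, Σ). Then the characteristic series 𝟙_L of L over R belongs to Rev(R,Σ), and consequently L ∈ RevL(R,Σ). -/
open Matrix

/-!
Over `ZMod 2` the transition matrices of a reversible automaton are partial injections of
the state set, so `‖A‖(w)` is the parity of the set `G_w` of initial states whose run on `w`
ends in a final state. Over `R`, let the same partial injections act on *sets* of states:
`s` goes to its image under `μ(a)` when `s` lies in the domain. This subset automaton is
again reversible, and its runs preserve cardinality. Starting from every subset of the
initial states and giving a final subset of size `k + 1` the weight `(-2)^k`, the word `w`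
receives `∑_{∅ ≠ s ⊆ G_w} (-2)^(#s-1) = ((1 - 2)^#G_w - 1) / (-2)`, which is `1` if `#G_w`
is odd and `0` otherwise, without ever dividing by `2` in `R`.
-/

open Matrix Finset

namespace RevWA

section PartialInjections

variable {S : Type} [Semiring S] {n : ℕ}

lemma exists_ne_zero_of_mul_apply_ne_zero {M M' : Matrix (Fin n) (Fin n) S} {p r : Fin n}
    (h : (M * M') p r ≠ 0) : ∃ q, M p q ≠ 0 ∧ M' q r ≠ 0 := by
  rw [mul_apply] at h
  obtain ⟨q, -, hq⟩ := exists_ne_zero_of_sum_ne_zero h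
  exact ⟨q, left_ne_zero_of_mul hq, right_ne_zero_of_mul hq⟩

lemma eq_of_one_apply_ne_zero {p q : Fin n} (h : (1 : Matrix (Fin n) (Fin n) S) p q ≠ 0) :
    p = q := by
  by_contra hpq
  exact h (one_apply_ne hpq)

lemma rowOk_one : rowOk (1 : Matrix (Fin n) (Fin n) S) := fun _ _ _ h h' =>
  (eq_of_one_apply_ne_zero h).symm.trans (eq_of_one_apply_ne_zero h')

lemma colOk_one : colOk (1 : Matrix (Fin n) (Fin n) S) := fun _ _ _ h h' =>
  (eq_of_one_apply_ne_zero h).trans (eq_of_one_apply_ne_zero h').symm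

lemma rowOk.mul {M M' : Matrix (Fin n) (Fin n) S} (hM : rowOk M) (hM' : rowOk M') :
    rowOk (M * M') := by
  intro p r r' h h'
  obtain ⟨q, hpq, hqr⟩ := exists_ne_zero_of_mul_apply_ne_zero h
  obtain ⟨q', hpq', hq'r'⟩ := exists_ne_zero_of_mul_apply_ne_zero h'
  cases hM p q q' hpq hpq'
  exact hM' q r r' hqr hq'r'

lemma colOk.mul {M M' : Matrix (Fin n) (Fin n) S} (hM : colOk M) (hM' : colOk M') :
    colOk (M * M') := by
  intro p p' r h h'
  obtain ⟨q, hpq, hqr⟩ := exists_ne_zero_of_mul_apply_ne_zero h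
  obtain ⟨q', hp'q', hq'r⟩ := exists_ne_zero_of_mul_apply_ne_zero h'
  cases hM' q q' r hqr hq'r
  exact hM p p' q hpq hp'q'

lemma mul_apply_of_rowOk {M M' : Matrix (Fin n) (Fin n) S} (hM : rowOk M) {p q : Fin n}
    (hpq : M p q ≠ 0) (r : Fin n) : (M * M') p r = M p q * M' q r := by
  rw [mul_apply]
  refine sum_eq_single q (fun x _ hxq => ?_) (fun h => absurd (mem_univ q) h)
  rw [not_ne_iff.mp fun hpx => hxq (hM p x q hpx hpq), zero_mul]

/-- Reading `M` as the partial injection `p ↦ q` for `M p q ≠ 0` (when `rowOk M` and `colOk M`),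
this says that it restricts to a bijection from `s` onto `t`. -/
def MapsOnto (M : Matrix (Fin n) (Fin n) S) (s t : Finset (Fin n)) : Prop :=
  (∀ p ∈ s, ∃ q ∈ t, M p q ≠ 0) ∧ (∀ q ∈ t, ∃ p ∈ s, M p q ≠ 0)

open scoped Classical in
noncomputable def imageSet (M : Matrix (Fin n) (Fin n) S) (s : Finset (Fin n)) : Finset (Fin n) :=
  {q | ∃ p ∈ s, M p q ≠ 0}

open scoped Classical in
noncomputable def preimageSet (M : Matrix (Fin n) (Fin n) S) (t : Finset (Fin n)) :
    Finset (Fin n) :=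
  {p | ∃ q ∈ t, M p q ≠ 0}

@[simp]
lemma mem_imageSet {M : Matrix (Fin n) (Fin n) S} {s : Finset (Fin n)} {q : Fin n} :
    q ∈ imageSet M s ↔ ∃ p ∈ s, M p q ≠ 0 := by
  simp [imageSet]

@[simp]
lemma mem_preimageSet {M : Matrix (Fin n) (Fin n) S} {t : Finset (Fin n)} {p : Fin n} :
    p ∈ preimageSet M t ↔ ∃ q ∈ t, M p q ≠ 0 := by
  simp [preimageSet]

lemma mapsOnto_imageSet {M : Matrix (Fin n) (Fin n) S} {s : Finset (Fin n)}
    (hs : ∀ p ∈ s, ∃ q, M p q ≠ 0) : MapsOnto M s (imageSet M s) := by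
  refine ⟨fun p hp => ?_, fun q hq => by simpa using hq⟩
  obtain ⟨q, hpq⟩ := hs p hp
  exact ⟨q, by simpa using ⟨p, hp, hpq⟩, hpq⟩

lemma mapsOnto_one_iff [Nontrivial S] {s t : Finset (Fin n)} :
    MapsOnto (1 : Matrix (Fin n) (Fin n) S) s t ↔ s = t := by
  refine ⟨fun h => ?_, ?_⟩
  · ext p
    refine ⟨fun hp => ?_, fun hp => ?_⟩
    · obtain ⟨q, hq, hpq⟩ := h.1 p hp
      rwa [eq_of_one_apply_ne_zero hpq]
    · obtain ⟨q, hq, hqp⟩ := h.2 p hp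
      rwa [← eq_of_one_apply_ne_zero hqp]
  · rintro rfl
    have hdiag : ∀ p, (1 : Matrix (Fin n) (Fin n) S) p p ≠ 0 := by
      simp [one_apply_eq]
    exact ⟨fun p hp => ⟨p, hp, hdiag p⟩, fun p hp => ⟨p, hp, hdiag p⟩⟩

variable {M M' : Matrix (Fin n) (Fin n) S} {s t u : Finset (Fin n)}

lemma MapsOnto.right_unique (hM : rowOk M) (h : MapsOnto M s t) (h' : MapsOnto M s u) :
    t = u := by
  suffices key : ∀ {t u}, MapsOnto M s t → MapsOnto M s u → t ⊆ u from
    (key h h').antisymm (key h' h)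
  intro t u h h' q hq
  obtain ⟨p, hp, hpq⟩ := h.2 q hq
  obtain ⟨q', hq', hpq'⟩ := h'.1 p hp
  rwa [hM p q q' hpq hpq']

lemma MapsOnto.left_unique (hM : colOk M) (h : MapsOnto M s u) (h' : MapsOnto M t u) :
    s = t := by
  suffices key : ∀ {s t}, MapsOnto M s u → MapsOnto M t u → s ⊆ t from
    (key h h').antisymm (key h' h)
  intro s t h h' p hp
  obtain ⟨q, hq, hpq⟩ := h.1 p hp
  obtain ⟨p', hp', hp'q⟩ := h'.2 q hq
  rwa [hM p p' q hpq hp'q]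

lemma MapsOnto.card_eq (hrow : rowOk M) (hcol : colOk M) (h : MapsOnto M s t) : #s = #t :=
  (card_le_card_of_forall_subsingleton (fun p q => M p q ≠ 0)
      (fun p hp => by simpa using h.1 p hp)
      (fun q _ p hp p' hp' => hcol p p' q hp.2 hp'.2)).antisymm
    (card_le_card_of_forall_subsingleton (fun q p => M p q ≠ 0)
      (fun q hq => by simpa using h.2 q hq)
      (fun p _ q hq q' hq' => hrow p q q' hq.2 hq'.2))

lemma MapsOnto.mul [NoZeroDivisors S] (hM : rowOk M) (h : MapsOnto M s t)
    (h' : MapsOnto M' t u) : MapsOnto (M * M') s u := by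
  refine ⟨fun p hp => ?_, fun r hr => ?_⟩
  · obtain ⟨q, hq, hpq⟩ := h.1 p hp
    obtain ⟨r, hr, hqr⟩ := h'.1 q hq
    exact ⟨r, hr, by rw [mul_apply_of_rowOk hM hpq]; exact mul_ne_zero hpq hqr⟩
  · obtain ⟨q, hq, hqr⟩ := h'.2 r hr
    obtain ⟨p, hp, hpq⟩ := h.2 q hq
    exact ⟨p, hp, by rw [mul_apply_of_rowOk hM hpq]; exact mul_ne_zero hpq hqr⟩

lemma MapsOnto.exists_of_mul (hM : rowOk M) (h : MapsOnto (M * M') s u) :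
    ∃ t, MapsOnto M s t ∧ MapsOnto M' t u := by
  have hdom : ∀ p ∈ s, ∃ q, M p q ≠ 0 := fun p hp => by
    obtain ⟨r, -, hpr⟩ := h.1 p hp
    obtain ⟨q, hpq, -⟩ := exists_ne_zero_of_mul_apply_ne_zero hpr
    exact ⟨q, hpq⟩
  refine ⟨imageSet M s, mapsOnto_imageSet hdom, fun q hq => ?_, fun r hr => ?_⟩
  · obtain ⟨p, hp, hpq⟩ := (mapsOnto_imageSet hdom).2 q hq
    obtain ⟨r, hr, hpr⟩ := h.1 p hp
    obtain ⟨q', hpq', hq'r⟩ := exists_ne_zero_of_mul_apply_ne_zero hpr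
    exact ⟨r, hr, by rwa [hM p q q' hpq hpq']⟩
  · obtain ⟨p, hp, hpr⟩ := h.2 r hr
    obtain ⟨q, hpq, hqr⟩ := exists_ne_zero_of_mul_apply_ne_zero hpr
    exact ⟨q, by simpa using ⟨p, hp, hpq⟩, hqr⟩

end PartialInjections

section SubsetMatrix

variable {S : Type} [Semiring S] {n : ℕ} (R : Type) [Ring R]

open scoped Classical in
noncomputable def subsetMatrix (M : Matrix (Fin n) (Fin n) S) :
    Matrix (Finset (Fin n)) (Finset (Fin n)) R :=
  of fun s t => if MapsOnto M s t then 1 else 0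

variable {R}

lemma mapsOnto_of_subsetMatrix_ne_zero {M : Matrix (Fin n) (Fin n) S} {s t : Finset (Fin n)}
    (h : subsetMatrix R M s t ≠ 0) : MapsOnto M s t := by
  by_contra hst
  simp [subsetMatrix, hst] at h

variable (R)

lemma subsetMatrix_one [Nontrivial S] :
    subsetMatrix R (1 : Matrix (Fin n) (Fin n) S) = 1 := by
  ext s t
  simp [subsetMatrix, mapsOnto_one_iff, one_apply]

lemma subsetMatrix_mul [NoZeroDivisors S] {M M' : Matrix (Fin n) (Fin n) S} (hM : rowOk M) :
    subsetMatrix R M * subsetMatrix R M' = subsetMatrix R (M * M') := by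
  ext s u
  simp only [mul_apply, subsetMatrix, of_apply, boole_mul, ← ite_and]
  by_cases h : MapsOnto (M * M') s u
  · obtain ⟨t, hst, htu⟩ := h.exists_of_mul hM
    rw [if_pos h, sum_eq_single t
      (fun t' _ ht' => if_neg fun h' => ht' (h'.1.right_unique hM hst))
      (fun ht => absurd (mem_univ t) ht), if_pos ⟨hst, htu⟩]
  · rw [if_neg h]
    exact sum_eq_zero fun t _ => if_neg fun h' => h (h'.1.mul hM h'.2)

def parityWeight : ℕ → R
  | 0 => 0
  | k + 1 => (-2) ^ k

lemma sum_powerset_neg_two_pow {γ : Type} [DecidableEq γ] (G : Finset γ) :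
    ∑ s ∈ G.powerset, (-2 : R) ^ #s = (-1) ^ #G := by
  induction G using Finset.induction_on with
  | empty => simp
  | insert a G ha ih =>
    rw [sum_powerset_insert ha, ih, card_insert_of_notMem ha,
      sum_congr rfl fun t ht => by
        rw [card_insert_of_notMem fun hat => ha (mem_powerset.mp ht hat), pow_succ],
      ← sum_mul, ih, pow_succ]
    noncomm_ring

lemma sum_powerset_parityWeight {γ : Type} [DecidableEq γ] (G : Finset γ) :
    ∑ s ∈ G.powerset, parityWeight R #s = if Odd #G then 1 else 0 := by
  induction G using Finset.induction_on with
  | empty => simp [parityWeight]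
  | insert a G ha ih =>
    rw [sum_powerset_insert ha, ih, card_insert_of_notMem ha,
      sum_congr rfl fun t ht => by
        rw [card_insert_of_notMem fun hat => ha (mem_powerset.mp ht hat), parityWeight],
      sum_powerset_neg_two_pow]
    rcases Nat.even_or_odd #G with hG | hG
    · simp [hG.neg_one_pow, Nat.not_odd_iff_even.mpr hG, hG.add_one]
    · simp [hG, hG.neg_one_pow, Nat.not_odd_iff_even.mpr hG.add_one]

def parityVec {γ : Type} [DecidableEq γ] (F : Finset γ) (t : Finset γ) : R :=
  if t ⊆ F then parityWeight R #t else 0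

lemma subsetMatrix_mulVec_parityVec [NoZeroDivisors S] {M : Matrix (Fin n) (Fin n) S}
    (hrow : rowOk M) (hcol : colOk M) (F : Finset (Fin n)) :
    subsetMatrix R M *ᵥ parityVec R F = parityVec R (preimageSet M F) := by
  funext s
  simp only [mulVec, dotProduct, subsetMatrix, of_apply, boole_mul]
  by_cases hs : ∀ p ∈ s, ∃ q, M p q ≠ 0
  · have hst := mapsOnto_imageSet hs
    have himage : imageSet M s ⊆ F ↔ s ⊆ preimageSet M F := by
      simp only [subset_iff, mem_preimageSet, mem_imageSet]
      refine ⟨fun h p hp => ?_, fun h q ⟨p, hp, hpq⟩ => ?_⟩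
      · obtain ⟨q, hq, hpq⟩ := hst.1 p hp
        exact ⟨q, h ⟨p, hp, hpq⟩, hpq⟩
      · obtain ⟨q', hq', hpq'⟩ := h hp
        rwa [hrow p q q' hpq hpq']
    rw [sum_eq_single (imageSet M s) (fun t _ ht => if_neg fun h => ht (h.right_unique hrow hst))
      (fun h => absurd (mem_univ _) h), if_pos hst, parityVec, parityVec, hst.card_eq hrow hcol]
    exact if_congr himage rfl rfl
  · have hpre : ¬ s ⊆ preimageSet M F := fun h => hs fun p hp => by
      obtain ⟨q, -, hpq⟩ := mem_preimageSet.mp (h hp)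
      exact ⟨q, hpq⟩
    rw [parityVec, if_neg hpre]
    exact sum_eq_zero fun t _ => if_neg fun h => hs fun p hp => (h.1 p hp).imp fun _ => And.right

lemma dotProduct_parityVec {γ : Type} [Fintype γ] [DecidableEq γ] (I G : Finset γ) :
    (fun s => if s ⊆ I then 1 else 0) ⬝ᵥ parityVec R G =
      if Odd #(I ∩ G) then (1 : R) else 0 := by
  rw [← sum_powerset_parityWeight, dotProduct, ← univ_inter (I ∩ G).powerset, ← sum_ite_mem]
  refine sum_congr rfl fun s _ => ?_
  simp only [parityVec, mem_powerset, subset_inter_iff, ite_and, boole_mul]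

end SubsetMatrix

section ZModTwo

variable {n : ℕ}

open scoped Classical in
noncomputable def vecSupport (v : Fin n → ZMod 2) : Finset (Fin n) :=
  {p | v p ≠ 0}

@[simp]
lemma mem_vecSupport {v : Fin n → ZMod 2} {p : Fin n} : p ∈ vecSupport v ↔ v p ≠ 0 := by
  simp [vecSupport]

lemma eq_one_of_ne_zero_zmod_two {x : ZMod 2} (hx : x ≠ 0) : x = 1 := by
  revert x; decide

lemma mulVec_apply_eq_ite {M : Matrix (Fin n) (Fin n) (ZMod 2)} (hM : rowOk M)
    (f : Fin n → ZMod 2) (p : Fin n) :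
    (M *ᵥ f) p = if p ∈ preimageSet M (vecSupport f) then 1 else 0 := by
  simp only [mulVec, dotProduct, mem_preimageSet, mem_vecSupport]
  split_ifs with hp
  · obtain ⟨q, hq, hpq⟩ := hp
    rw [sum_eq_single q (fun q' _ hq' => ?_) (fun h => absurd (mem_univ q) h),
      eq_one_of_ne_zero_zmod_two hpq, eq_one_of_ne_zero_zmod_two hq, mul_one]
    rw [not_ne_iff.mp fun hpq' => hq' (hM p q' q hpq' hpq), zero_mul]
  · refine sum_eq_zero fun q _ => by_contra fun hq => hp ⟨q, ?_, ?_⟩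
    exacts [right_ne_zero_of_mul hq, left_ne_zero_of_mul hq]

lemma dotProduct_mulVec_eq_card {M : Matrix (Fin n) (Fin n) (ZMod 2)} (hM : rowOk M)
    (i f : Fin n → ZMod 2) :
    i ⬝ᵥ M *ᵥ f = #(vecSupport i ∩ preimageSet M (vecSupport f)) := by
  rw [← filter_univ_mem (_ ∩ _), natCast_card_filter, dotProduct]
  refine sum_congr rfl fun p _ => ?_
  rw [mulVec_apply_eq_ite hM, mul_boole]
  rcases eq_or_ne (i p) 0 with hi | hi
  · simp [hi]
  · simp [eq_one_of_ne_zero_zmod_two hi]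

end ZModTwo

lemma comp_equiv_dotProduct_submatrix_mulVec {S ι κ : Type} [Semiring S] [Fintype ι] [Fintype κ]
    (e : κ ≃ ι) (u v : ι → S) (N : Matrix ι ι S) :
    u ∘ e ⬝ᵥ N.submatrix e e *ᵥ (v ∘ e) = u ⬝ᵥ N *ᵥ v := by
  rw [submatrix_mulVec_equiv, Function.comp_assoc, Equiv.self_comp_symm, Function.comp_id,
    comp_equiv_dotProduct_comp_equiv]

namespace WA

variable {S : Type} [Semiring S] {α : Type}

@[simp]
lemma matWord_nil (A : WA S α) : A.matWord [] = 1 := rfl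

@[simp]
lemma matWord_cons (A : WA S α) (a : α) (w : List α) :
    A.matWord (a :: w) = A.trans a * A.matWord w :=
  List.prod_cons

lemma Reversible.rowOk_matWord {A : WA S α} (hA : A.Reversible) (w : List α) :
    rowOk (A.matWord w) := by
  induction w with
  | nil => exact rowOk_one
  | cons a w ih => exact (hA a).1.mul ih

lemma Reversible.colOk_matWord {A : WA S α} (hA : A.Reversible) (w : List α) :
    colOk (A.matWord w) := by
  induction w with
  | nil => exact colOk_one
  | cons a w ih => exact (hA a).2.mul ih

lemma series_eq_card {A : WA (ZMod 2) α} (hA : A.Reversible) (w : List α) :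
    A.series w = #(vecSupport A.init ∩ preimageSet (A.matWord w) (vecSupport A.final)) :=
  dotProduct_mulVec_eq_card (hA.rowOk_matWord w) _ _

variable (R : Type) [Ring R]

noncomputable def subsetAutomaton (A : WA (ZMod 2) α) : WA R α where
  n := Fintype.card (Finset (Fin A.n))
  init := (fun s => if s ⊆ vecSupport A.init then 1 else 0) ∘ (Fintype.equivFin _).symm
  trans a := (subsetMatrix R (A.trans a)).submatrix (Fintype.equivFin _).symm
    (Fintype.equivFin _).symm
  final := parityVec R (vecSupport A.final) ∘ (Fintype.equivFin _).symm

variable {R}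

lemma subsetAutomaton_reversible {A : WA (ZMod 2) α} (hA : A.Reversible) :
    (A.subsetAutomaton R).Reversible := fun a =>
  ⟨fun _ _ _ h h' => (Fintype.equivFin _).symm.injective <|
      (mapsOnto_of_subsetMatrix_ne_zero h).right_unique (hA a).1
        (mapsOnto_of_subsetMatrix_ne_zero h'),
    fun _ _ _ h h' => (Fintype.equivFin _).symm.injective <|
      (mapsOnto_of_subsetMatrix_ne_zero h).left_unique (hA a).2
        (mapsOnto_of_subsetMatrix_ne_zero h')⟩

lemma subsetAutomaton_matWord {A : WA (ZMod 2) α} (hA : A.Reversible) (w : List α) :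
    (A.subsetAutomaton R).matWord w = (subsetMatrix R (A.matWord w)).submatrix
      (Fintype.equivFin _).symm (Fintype.equivFin _).symm := by
  induction w with
  | nil => rw [matWord_nil, matWord_nil, subsetMatrix_one, submatrix_one_equiv]; rfl
  | cons a w ih =>
    rw [matWord_cons, matWord_cons, ih, ← subsetMatrix_mul R (hA a).1]
    exact submatrix_mul_equiv _ _ _ _ _

lemma subsetAutomaton_series {A : WA (ZMod 2) α} (hA : A.Reversible) (w : List α) :
    (A.subsetAutomaton R).series w =
      if Odd #(vecSupport A.init ∩ preimageSet (A.matWord w) (vecSupport A.final)) then 1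
      else 0 := by
  rw [series, subsetAutomaton_matWord hA, ← dotProduct_parityVec,
    ← subsetMatrix_mulVec_parityVec R (hA.rowOk_matWord w) (hA.colOk_matWord w)]
  exact comp_equiv_dotProduct_submatrix_mulVec _ (fun s => if s ⊆ vecSupport A.init then 1 else 0)
    (parityVec R (vecSupport A.final)) _

lemma subsetAutomaton_series_eq_charSeries {A : WA (ZMod 2) α} (hA : A.Reversible) :
    (A.subsetAutomaton R).series = charSeries R (supp A.series) := by
  funext w
  simp [subsetAutomaton_series hA, charSeries, supp, series_eq_card hA,
    ZMod.natCast_ne_zero_iff_odd, Set.indicator_apply]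

end WA

lemma supp_charSeries {S : Type} [Semiring S] [Nontrivial S] {α : Type} (L : Set (List α)) :
    supp (charSeries S L) = L := by
  ext w
  by_cases hw : w ∈ L <;> simp [supp, charSeries, hw]

end RevWA

open RevWA in
theorem stmt12_general (R : Type) [Ring R] (hR : (0 : R) ≠ 1)
    (α : Type)
    (L : Set (List α)) (hL : L ∈ RevL (ZMod 2) α) :
    charSeries R L ∈ Rev R α ∧ L ∈ RevL R α := by
  have : Nontrivial R := ⟨0, 1, hR⟩
  obtain ⟨_, ⟨A, hA, rfl⟩, rfl⟩ := hL
  have hRev : charSeries R (supp A.series) ∈ Rev R α :=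
    ⟨A.subsetAutomaton R, WA.subsetAutomaton_reversible hA,
      WA.subsetAutomaton_series_eq_charSeries hA⟩
  exact ⟨hRev, _, hRev, supp_charSeries _⟩

open RevWA in
theorem stmt12 (R : Type) [Ring R] (hR : (0 : R) ≠ 1)
    (α : Type) [Fintype α] [Nonempty α]
    (L : Set (List α)) (hL : L ∈ RevL (ZMod 2) α) :
    charSeries R L ∈ Rev R α ∧ L ∈ RevL R α :=
  stmt12_general R hR α L hL
end
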